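/- Let Γ be a finite tree (a connected acyclic simple graph) whose vertices are colored by a function c into a set of colors, and suppose: (1) no two adjacent vertices of Γ have the same color; (2) for any two vertices v and w with c(v) = c(w) and any color d, if some neighbor of v has color d then some neighbor of w also has color d. Then any two vertices of the same color are an even distance apart in Γ, i.e. if c(v) = c(w) then the graph distance dist(v, w) is even. -/

import Mathlib

/-!
Suppose two vertices of the same colour are joined by a path of odd length, and take `n` minimal;
`n ≥ 3` since adjacent vertices have different colours. A path `v = p₀, …, pₙ` with
`c p₀ = c pₙ` can always be prolonged at `p₀`: by (2), `p₀` has a neighbour `v'` of colour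
`c pₙ₋₁`, and `v'` cannot lie on the path, for in an acyclic graph it would be `p₁`, and then
`p₁, …, pₙ₋₁` would be a path of odd length `n - 2` between vertices of the same colour.
The new path `v', p₀, …, pₙ` again has equal colours at positions `0` and `n`, so the
prolongation can be repeated forever, which is impossible in a finite graph.
-/

namespace SimpleGraph

variable {V C : Type*} {G : SimpleGraph V}

def NeighborColorsDependOnColor (G : SimpleGraph V) (c : V → C) : Prop :=
  ∀ v w : V, c v = c w → ∀ d : C, (∃ u : V, G.Adj v u ∧ c u = d) → ∃ u : V, G.Adj w u ∧ c u = d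

theorem Walk.IsPath.exists_isPath_getVert_getVert {u v : V} {p : G.Walk u v} (hp : p.IsPath)
    {i j : ℕ} (hij : i ≤ j) (hj : j ≤ p.length) :
    ∃ q : G.Walk (p.getVert i) (p.getVert j), q.IsPath ∧ q.length = j - i := by
  have hstart : (p.take j).getVert i = p.getVert i := by
    rw [Walk.take_getVert, min_eq_right hij]
  refine ⟨((p.take j).drop i).copy hstart rfl, ?_, ?_⟩
  · simpa using (hp.take j).drop i
  · simp [Walk.drop_length, Walk.take_length, min_eq_left hj]

variable {c : V → C}

theorem IsAcyclic.exists_longer_isPath_color_eq_getVert (hG : G.IsAcyclic)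
    (hc : G.NeighborColorsDependOnColor c) {n : ℕ} (hn : 2 ≤ n)
    (hgap : ∀ (x y : V) (q : G.Walk x y), q.IsPath → q.length + 2 = n → c x ≠ c y)
    {v u : V} {p : G.Walk v u} (hp : p.IsPath) (hlen : n ≤ p.length)
    (hcol : c v = c (p.getVert n)) :
    ∃ (v' : V) (q : G.Walk v' u), q.IsPath ∧ q.length = p.length + 1 ∧
      c v' = c (q.getVert n) := by
  have hadj : G.Adj (p.getVert (n - 1)) (p.getVert n) := by
    simpa [Nat.sub_add_cancel (by omega : 1 ≤ n)] using p.adj_getVert_succ (i := n - 1) (by omega)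
  obtain ⟨v', hvv', hcv'⟩ := hc _ v hcol.symm _ ⟨_, hadj.symm, rfl⟩
  have hv' : v' ∉ p.support := by
    intro hmem
    have hsnd : v' = p.getVert 1 := hG.eq_snd_of_adj_start hp hvv' hmem
    obtain ⟨q, hq, hqlen⟩ := hp.exists_isPath_getVert_getVert (i := 1) (j := n - 1) (by omega)
      (by omega)
    exact hgap _ _ q hq (by omega) (hsnd ▸ hcv')
  refine ⟨v', .cons hvv'.symm p, hp.cons hv', by simp, ?_⟩
  rw [Walk.getVert_cons _ _ (by omega), hcv']

theorem IsAcyclic.color_ne_of_isPath_length_eq [Finite V] (hG : G.IsAcyclic)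
    (hc : G.NeighborColorsDependOnColor c) {n : ℕ} (hn : 2 ≤ n)
    (hgap : ∀ (x y : V) (q : G.Walk x y), q.IsPath → q.length + 2 = n → c x ≠ c y)
    {x y : V} {p : G.Walk x y} (hp : p.IsPath) (hlen : p.length = n) : c x ≠ c y := by
  intro hxy
  have hlong : ∀ k : ℕ, ∃ (v u : V) (q : G.Walk v u), q.IsPath ∧ q.length = n + k ∧
      c v = c (q.getVert n) := by
    intro k
    induction k with
    | zero => exact ⟨x, y, p, hp, hlen, by rw [← hlen, Walk.getVert_length, hxy]⟩
    | succ k ih =>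
      obtain ⟨v, u, q, hq, hqlen, hqcol⟩ := ih
      obtain ⟨v', q', hq', hq'len, hq'col⟩ :=
        hG.exists_longer_isPath_color_eq_getVert hc hn hgap hq (by omega) hqcol
      exact ⟨v', u, q', hq', by omega, hq'col⟩
  have : Fintype V := Fintype.ofFinite V
  obtain ⟨_, _, q, hq, hqlen, -⟩ := hlong (Fintype.card V)
  have := hq.length_lt
  omega

theorem IsAcyclic.color_ne_of_isPath_of_odd_length [Finite V] (hG : G.IsAcyclic)
    (hadj : ∀ v w : V, G.Adj v w → c v ≠ c w) (hc : G.NeighborColorsDependOnColor c)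
    {x y : V} {p : G.Walk x y} (hp : p.IsPath) (hodd : Odd p.length) : c x ≠ c y := by
  induction hn : p.length using Nat.strong_induction_on generalizing x y with
  | _ n ih =>
    obtain ⟨k, rfl⟩ := hn ▸ hodd
    obtain rfl | hk : k = 0 ∨ 1 ≤ k := by omega
    · exact hadj x y (Walk.adj_of_length_eq_one hn)
    · refine hG.color_ne_of_isPath_length_eq hc (by omega) (fun x' y' q hq hqlen => ?_) hp hn
      exact ih _ (by omega) hq ⟨k - 1, by omega⟩ rfl

end SimpleGraph

/-- Let `Γ` be a finite tree whose vertices are colored by `c`, such that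
(1) no two adjacent vertices have the same color, and
(2) if `v` and `w` have the same color and some neighbor of `v` has color `d`,
then some neighbor of `w` also has color `d`.
Then any two vertices of the same color are an even distance apart in `Γ`. -/
theorem stmt1 {V C : Type*} [Fintype V] (Γ : SimpleGraph V) (hΓ : Γ.IsTree)
    (c : V → C)
    (h1 : ∀ v w : V, Γ.Adj v w → c v ≠ c w)
    (h2 : ∀ v w : V, c v = c w → ∀ d : C,
      (∃ u : V, Γ.Adj v u ∧ c u = d) → ∃ u : V, Γ.Adj w u ∧ c u = d) :
    ∀ v w : V, c v = c w → Even (Γ.dist v w) := by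
  intro v w hvw
  by_contra hodd
  rw [Nat.not_even_iff_odd] at hodd
  obtain ⟨p, hp, hlen⟩ := (SimpleGraph.Reachable.of_dist_ne_zero hodd.pos.ne').exists_path_of_dist
  exact hΓ.isAcyclic.color_ne_of_isPath_of_odd_length h1 h2 hp (hlen ▸ hodd) hvw
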